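/- arXiv:1304.7642 — 7 statements merged into one kernel-verified Lean document; each statement's English description precedes it below -/
import Mathlib

section
/- Let n ∈ ℕ, let a, y, z : Fin n → ℝ, and let s : Fin n → ℝ be nonincreasing (s k ≥ s l whenever k ≤ l) and nonnegative. Let σ and τ be permutations of Fin n such that k ↦ y(σ k) and k ↦ z(τ k) are strictly decreasing. Assume that for all indices i, j, if y i > y j and z i < z j then a i > a j. Then ∑_{k} a(σ k) · s k ≥ ∑_{k} a(τ k) · s k. -/
/-!
Let `D k` be the difference `a (σ k) - a (τ k)` of the weights in slot `k`. For every `m`, the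
sets of advertisers placed in the top `m + 1` slots by the two rankings have the same size, and
any advertiser that only `z` places there loses to any advertiser that only `y` places there, so
the prefix sums of `D` are nonnegative. Abel summation against the nonincreasing, nonnegative
click effects `s` then makes `∑ k, D k * s k` nonnegative.
-/

open Finset

theorem Finset.sum_le_sum_of_card_eq_of_forall_sdiff_le {ι M : Type*} [DecidableEq ι]
    [AddCommMonoid M] [LinearOrder M] [IsOrderedAddMonoid M] {s t : Finset ι} {f : ι → M}
    (hcard : #t = #s) (h : ∀ i ∈ t \ s, ∀ j ∈ s \ t, f i ≤ f j) :
    ∑ i ∈ t, f i ≤ ∑ i ∈ s, f i := by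
  have hsdiff : ∑ i ∈ t \ s, f i ≤ ∑ j ∈ s \ t, f j := by
    rcases (t \ s).eq_empty_or_nonempty with hempty | hne
    · have : s \ t = ∅ := by rw [← card_eq_zero, card_sdiff_comm hcard.symm, hempty, card_empty]
      simp [hempty, this]
    · calc ∑ i ∈ t \ s, f i ≤ #(t \ s) • (t \ s).sup' hne f :=
            sum_le_card_nsmul _ _ _ fun i hi => le_sup' f hi
        _ = #(s \ t) • (t \ s).sup' hne f := by rw [card_sdiff_comm hcard]
        _ ≤ ∑ j ∈ s \ t, f j :=
            card_nsmul_le_sum _ _ _ fun j hj => sup'_le hne f fun i hi => h i hi j hj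
  calc ∑ i ∈ t, f i = ∑ i ∈ t ∩ s, f i + ∑ i ∈ t \ s, f i := (sum_inter_add_sum_sdiff t s f).symm
    _ ≤ ∑ i ∈ s ∩ t, f i + ∑ j ∈ s \ t, f j := by rw [inter_comm]; gcongr
    _ = ∑ i ∈ s, f i := sum_inter_add_sum_sdiff s t f

theorem Equiv.Perm.sum_Iic_comp_le {ι M : Type*} [LinearOrder ι] [LocallyFiniteOrderBot ι]
    [AddCommMonoid M] [LinearOrder M] [IsOrderedAddMonoid M] {α β : Type*} [Preorder α]
    [Preorder β] {a : ι → M} {y : ι → α} {z : ι → β}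
    {σ τ : Equiv.Perm ι} (hσ : StrictAnti (y ∘ σ)) (hτ : StrictAnti (z ∘ τ))
    (ha : ∀ i j, y j < y i → z i < z j → a j ≤ a i) (m : ι) :
    ∑ k ≤ m, a (τ k) ≤ ∑ k ≤ m, a (σ k) := by
  have hmap (π : Equiv.Perm ι) : ∑ k ≤ m, a (π k) = ∑ i ∈ (Iic m).map π.toEmbedding, a i := by
    simp
  rw [hmap σ, hmap τ]
  refine sum_le_sum_of_card_eq_of_forall_sdiff_le (by simp) fun i hi j hj => ?_
  simp only [mem_sdiff, mem_map_equiv, mem_Iic, not_le] at hi hj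
  have hy : y i < y j := by simpa using hσ (hj.1.trans_lt hi.2)
  have hz : z j < z i := by simpa using hτ (hi.1.trans_lt hj.2)
  exact ha j i hy hz

/-- Lowering every `s k` by `s (last n)` keeps `s` antitone and nonnegative on the first `n`
indices, and the amount removed contributes `s (last n)` times the full, nonnegative, sum of `h`. -/
theorem Fin.sum_mul_nonneg_of_antitone {R : Type*} [Ring R] [PartialOrder R] [IsOrderedRing R] :
    ∀ {n : ℕ} {h s : Fin n → R}, Antitone s → 0 ≤ s → (∀ m, 0 ≤ ∑ k ≤ m, h k) →
      0 ≤ ∑ k, h k * s k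
  | 0, _, _, _, _, _ => by simp
  | n + 1, h, s, hs_anti, hs_nonneg, hprefix => by
    have htail : 0 ≤ ∑ k : Fin n, h k.castSucc * (s k.castSucc - s (last n)) :=
      sum_mul_nonneg_of_antitone (fun k l hkl => sub_le_sub_right (hs_anti hkl) _)
        (fun k => sub_nonneg.2 (hs_anti (le_last _)))
        (fun m => by simpa [sum_Iic_castSucc] using hprefix m.castSucc)
    have hlast : 0 ≤ (∑ k, h k) * s (last n) :=
      mul_nonneg (by simpa [← top_eq_last, Iic_top] using hprefix (last n)) (hs_nonneg _)
    have hsplit : ∑ k, h k * s k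
        = ∑ k : Fin n, h k.castSucc * (s k.castSucc - s (last n)) + (∑ k, h k) * s (last n) := by
      simp only [sum_univ_castSucc, mul_sub, sum_sub_distrib, add_mul, sum_mul]
      abel
    rw [hsplit]
    exact add_nonneg htail hlast

/-- Lemma 2 (per-realisation): if whenever the rankings `y` and `z` disagree about
a pair of advertisers the ranking `y` places the one with larger weight `a` higher,
then the virtual surplus of the allocation induced by `y` is at least that induced by `z`. -/
theorem ranking_comparison (n : ℕ) (a y z : Fin n → ℝ) (s : Fin n → ℝ)
    (hs_mono : ∀ k l : Fin n, k ≤ l → s l ≤ s k)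
    (hs_nonneg : ∀ k : Fin n, 0 ≤ s k)
    (σ τ : Equiv.Perm (Fin n))
    (hσ : ∀ k l : Fin n, k < l → y (σ l) < y (σ k))
    (hτ : ∀ k l : Fin n, k < l → z (τ l) < z (τ k))
    (ha : ∀ i j : Fin n, y j < y i → z i < z j → a j < a i) :
    ∑ k, a (τ k) * s k ≤ ∑ k, a (σ k) * s k := by
  have hprefix (m : Fin n) : 0 ≤ ∑ k ≤ m, (a (σ k) - a (τ k)) := by
    rw [sum_sub_distrib, sub_nonneg]
    exact Equiv.Perm.sum_Iic_comp_le (a := a) hσ hτ (fun i j hy hz => (ha i j hy hz).le) m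
  have hsum := Fin.sum_mul_nonneg_of_antitone (fun k l => hs_mono k l) hs_nonneg hprefix
  simpa only [sub_mul, sum_sub_distrib, sub_nonneg] using hsum
end

section
/- Let r > 0 and let φ : ℝ → ℝ be strictly increasing on [r, ∞) with φ(r) ≤ 0, and suppose that for all reals t > u ≥ r one has r·(φ(t) − φ(u)) ≤ u·φ(t) − t·φ(u). Let θ_i, θ_j ≥ r and w_i, w_j > 0 satisfy (θ_i − r)·w_i > (θ_j − r)·w_j and θ_i·w_i < θ_j·w_j. Then φ(θ_i)·w_i > φ(θ_j)·w_j. -/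
/-!
Disagreement of the two rankings forces `wi < wj` and `θj < θi`. If `φ θj ≤ 0`, monotonicity of
`φ` and `wi < wj` already give the claim. Otherwise `θj > r`, and the hypothesis on `φ` is the
cross-multiplied form of `φ θj / (θj - r) ≤ φ θi / (θi - r)`; multiplying this by
`(θj - r) * wj < (θi - r) * wi` yields `φ θj * wj < φ θi * wi`.
-/

theorem lt_of_sub_mul_lt_of_mul_lt {r a b c d : ℝ} (hr : 0 < r)
    (h₁ : (c - r) * d < (a - r) * b) (h₂ : a * b < c * d) : b < d :=
  sub_pos.mp (pos_of_mul_pos_right (show 0 < r * (d - b) by linarith) hr.le)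

theorem lt_of_sub_mul_lt_of_le {r a b c d : ℝ} (hc : r ≤ c) (hb : 0 < b) (hbd : b ≤ d)
    (h : (c - r) * d < (a - r) * b) : c < a := by
  have : (c - r) * b < (a - r) * b :=
    (mul_le_mul_of_nonneg_left hbd (sub_nonneg.mpr hc)).trans_lt h
  linarith [lt_of_mul_lt_mul_right this hb.le]

theorem mul_lt_mul_of_cross_le {a b c d x y : ℝ} (ha : 0 < a) (hb : 0 < b) (hy : 0 < y)
    (hratio : d * a ≤ b * c) (h : b * x < d * y) : a * x < c * y := by
  have : b * (a * x) < b * (c * y) :=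
    calc b * (a * x) = a * (b * x) := by ring
      _ < a * (d * y) := mul_lt_mul_of_pos_left h ha
      _ = (d * a) * y := by ring
      _ ≤ (b * c) * y := mul_le_mul_of_nonneg_right hratio hy.le
      _ = b * (c * y) := by ring
  exact lt_of_mul_lt_mul_left this hb.le

theorem proposed_ranking_correct_general (r : ℝ) (hr : 0 < r) (φ : ℝ → ℝ)
    (hmono : StrictMonoOn φ (Set.Ici r))
    (hφr : φ r ≤ 0)
    (hcond : ∀ t u : ℝ, r ≤ u → u < t → r * (φ t - φ u) ≤ u * φ t - t * φ u)
    (θi θj wi wj : ℝ) (hθj : r ≤ θj)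
    (hwi : 0 < wi)
    (h1 : (θj - r) * wj < (θi - r) * wi)
    (h2 : θi * wi < θj * wj) :
    φ θj * wj < φ θi * wi := by
  have hw : wi < wj := lt_of_sub_mul_lt_of_mul_lt hr h1 h2
  have hθ : θj < θi := lt_of_sub_mul_lt_of_le hθj hwi hw.le h1
  rcases le_or_gt (φ θj) 0 with hφj | hφj
  · calc φ θj * wj ≤ φ θj * wi := mul_le_mul_of_nonpos_left hw.le hφj
      _ < φ θi * wi := mul_lt_mul_of_pos_right (hmono hθj (hθj.trans hθ.le) hθ) hwi
  · have hrj : r < θj := hθj.lt_of_ne (by rintro rfl; linarith)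
    have hratio : (θi - r) * φ θj ≤ (θj - r) * φ θi := by linarith [hcond θi θj hθj hθ]
    exact mul_lt_mul_of_cross_le hφj (sub_pos.mpr hrj) hwi hratio h1

/-- Key implication inside Lemma 3: whenever the proposed ranking `(θ - r)·w`
disagrees with the standard ranking `θ·w`, the proposed ranking places the
advertiser with higher virtual surplus `φ(θ)·w` on top. -/
theorem proposed_ranking_correct (r : ℝ) (hr : 0 < r) (φ : ℝ → ℝ)
    (hmono : StrictMonoOn φ (Set.Ici r))
    (hφr : φ r ≤ 0)
    (hcond : ∀ t u : ℝ, r ≤ u → u < t → r * (φ t - φ u) ≤ u * φ t - t * φ u)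
    (θi θj wi wj : ℝ) (hθi : r ≤ θi) (hθj : r ≤ θj)
    (hwi : 0 < wi) (hwj : 0 < wj)
    (h1 : (θj - r) * wj < (θi - r) * wi)
    (h2 : θi * wi < θj * wj) :
    φ θj * wj < φ θi * wi :=
  proposed_ranking_correct_general r hr φ hmono hφr hcond θi θj wi wj hθj hwi h1 h2
end

section
/- Let r > 0 and let φ : [r, ∞) → ℝ be differentiable with φ'(t) > 0 for all t ≥ r, φ(r) ≤ 0, and r ≤ t − φ(t)/φ'(t) for all t ≥ r. Then for all θ_i > θ_j ≥ r one has (θ_j − r)·φ(θ_i) ≥ (θ_i − r)·φ(θ_j); equivalently, r·(φ(θ_i) − φ(θ_j)) ≤ θ_j·φ(θ_i) − θ_i·φ(θ_j). -/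
/-! Condition (e-maincond) with `φ' > 0` says `φ t ≤ (t - r) φ' t` for `t ≥ r`, i.e. the
derivative of `φ t / (t - r)` is nonnegative on `(r, ∞)`. So this quotient is monotone there,
and cross-multiplying gives the inequality. The boundary case `θⱼ = r` is the same inequality
at `t = r`, read as `φ r ≤ 0`. -/

open Set

section SlopeFromPoint

variable {a : ℝ} {f f' : ℝ → ℝ}

theorem monotoneOn_div_sub_of_le_mul_deriv
    (hderiv : ∀ t, a < t → HasDerivAt f (f' t) t)
    (hle : ∀ t, a < t → f t ≤ (t - a) * f' t) :
    MonotoneOn (fun t => f t / (t - a)) (Ioi a) := by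
  have hquot : ∀ t ∈ Ioi a,
      HasDerivAt (fun t => f t / (t - a)) ((f' t * (t - a) - f t * 1) / (t - a) ^ 2) t :=
    fun t ht => (hderiv t ht).div ((hasDerivAt_id t).sub_const a) (sub_ne_zero.2 ht.ne')
  refine monotoneOn_of_hasDerivWithinAt_nonneg (convex_Ioi a)
    (fun t ht => (hquot t ht).continuousAt.continuousWithinAt)
    (fun t ht => (hquot t (interior_subset ht)).hasDerivWithinAt) fun t ht => ?_
  have ht : a < t := interior_subset ht
  have hnum : 0 ≤ f' t * (t - a) - f t * 1 := by linarith [hle t ht, mul_comm (t - a) (f' t)]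
  positivity

theorem sub_mul_le_sub_mul_of_le_mul_deriv
    (hderiv : ∀ t, a < t → HasDerivAt f (f' t) t)
    (hle : ∀ t, a ≤ t → f t ≤ (t - a) * f' t)
    {x y : ℝ} (hx : a ≤ x) (hxy : x ≤ y) :
    (y - a) * f x ≤ (x - a) * f y := by
  rcases hx.eq_or_lt with rfl | hx
  · have hfa : f a ≤ 0 := by simpa using hle a le_rfl
    simpa using mul_nonpos_of_nonneg_of_nonpos (sub_nonneg.2 hxy) hfa
  have hy : a < y := hx.trans_le hxy
  have hmono := monotoneOn_div_sub_of_le_mul_deriv hderiv (fun t ht => hle t ht.le) hx hy hxy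
  rw [div_le_div_iff₀ (sub_pos.2 hx) (sub_pos.2 hy)] at hmono
  linarith

end SlopeFromPoint

theorem reserve_le_g_general (r : ℝ) (φ φ' : ℝ → ℝ)
    (hderiv : ∀ t : ℝ, r ≤ t → HasDerivAt φ (φ' t) t)
    (hpos : ∀ t : ℝ, r ≤ t → 0 < φ' t)
    (hcond : ∀ t : ℝ, r ≤ t → r ≤ t - φ t / φ' t) :
    ∀ θi θj : ℝ, r ≤ θj → θj < θi →
      (θj - r) * φ θi ≥ (θi - r) * φ θj ∧
      r * (φ θi - φ θj) ≤ θj * φ θi - θi * φ θj := by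
  intro θi θj hj hji
  have hle : ∀ t, r ≤ t → φ t ≤ (t - r) * φ' t := fun t ht => by
    have := hcond t ht
    rwa [le_sub_comm, div_le_iff₀ (hpos t ht)] at this
  have key := sub_mul_le_sub_mul_of_le_mul_deriv (fun t ht => hderiv t ht.le) hle hj hji.le
  exact ⟨key, by linarith⟩

/-- Appendix C (proof of Lemma 3): under condition (e-maincond), the reserve `r`
is at most `g(θᵢ, θⱼ)` for all `θᵢ > θⱼ ≥ r`. -/
theorem reserve_le_g (r : ℝ) (hr : 0 < r) (φ φ' : ℝ → ℝ)
    (hderiv : ∀ t : ℝ, r ≤ t → HasDerivAt φ (φ' t) t)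
    (hpos : ∀ t : ℝ, r ≤ t → 0 < φ' t)
    (hφr : φ r ≤ 0)
    (hcond : ∀ t : ℝ, r ≤ t → r ≤ t - φ t / φ' t) :
    ∀ θi θj : ℝ, r ≤ θj → θj < θi →
      (θj - r) * φ θi ≥ (θi - r) * φ θj ∧
      r * (φ θi - φ θj) ≤ θj * φ θi - θi * φ θj :=
  reserve_le_g_general r φ φ' hderiv hpos hcond
end

section
/- Define φ : (0, 1] → ℝ by φ(t) = 4t/3 − 1/6 − 1/(6t) and ψ : (0, 1] → ℝ by ψ(t) = 4/3 + 1/(6t²). Then: (i) for all t ∈ (0, 1), φ(t) = t − (1 − F(t))/f(t), where F(t) = 3t² − 2t³ and f(t) = 6t(1 − t); (ii) ψ(t) is the derivative of φ at every t ∈ (0, 1); (iii) the number θ̄ := (1 + √33)/16 satisfies φ(θ̄) = 0 and 1/3 < θ̄ < 1; (iv) 1 − φ(1)/ψ(1) = 1/3. Consequently, for every r ∈ (1/3, θ̄] there exists t ∈ [r, 1] (namely t = 1) with t − φ(t)/ψ(t) < r. -/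
/-!
For the Beta(2,2) law, `1 - F t = (1 - t)^2 (1 + 2t)` and `f t = 6t(1 - t)`, so the virtual value
is `φ t = (8t^2 - t - 1) / (6t)`, whose positive root is `θ̄ = (1 + √33)/16 ∈ (1/3, 1)`.
At the endpoint `t = 1` one has `φ 1 = 1` and `φ' 1 = 3/2`, hence `1 - φ 1 / φ' 1 = 1/3`, which is
below every reserve `r ∈ (1/3, θ̄]`.
-/

/-- The virtual value function of the Beta(2,2) distribution. -/
noncomputable def phiBeta (t : ℝ) : ℝ := 4 * t / 3 - 1 / 6 - 1 / (6 * t)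

/-- Its derivative. -/
noncomputable def psiBeta (t : ℝ) : ℝ := 4 / 3 + 1 / (6 * t ^ 2)

noncomputable def optimalReserve : ℝ := (1 + Real.sqrt 33) / 16

lemma phiBeta_eq_div {t : ℝ} (ht : t ≠ 0) : phiBeta t = (8 * t ^ 2 - t - 1) / (6 * t) := by
  unfold phiBeta
  field_simp
  ring

lemma phiBeta_eq_virtualValue {t : ℝ} (ht₀ : t ≠ 0) (ht₁ : t ≠ 1) :
    phiBeta t = t - (1 - (3 * t ^ 2 - 2 * t ^ 3)) / (6 * t * (1 - t)) := by
  have : 1 - t ≠ 0 := sub_ne_zero.mpr ht₁.symm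
  unfold phiBeta
  field_simp
  ring

lemma hasDerivAt_phiBeta {t : ℝ} (ht : t ≠ 0) : HasDerivAt phiBeta (psiBeta t) t := by
  have hlin : HasDerivAt (fun s : ℝ => 4 * s / 3 - 1 / 6) (4 / 3) t := by
    simpa using ((hasDerivAt_id t).const_mul 4 |>.div_const 3).sub_const (1 / 6 : ℝ)
  have hinv : HasDerivAt (fun s : ℝ => 1 / (6 * s)) (-(1 / (6 * t ^ 2))) t := by
    have h : HasDerivAt (fun s : ℝ => (6 * s)⁻¹) _ t :=
      ((hasDerivAt_id' t).const_mul 6).inv (mul_ne_zero (by norm_num) ht)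
    simp only [one_div]
    exact h.congr_deriv (by field_simp)
  exact (hlin.sub hinv).congr_deriv (by rw [psiBeta, sub_neg_eq_add])

lemma five_lt_sqrt_33 : (5 : ℝ) < Real.sqrt 33 := by
  rw [Real.lt_sqrt (by norm_num)]
  norm_num

lemma sqrt_33_lt_six : Real.sqrt 33 < 6 := by
  rw [Real.sqrt_lt' (by norm_num)]
  norm_num

lemma one_third_lt_optimalReserve : 1 / 3 < optimalReserve := by
  unfold optimalReserve
  linarith [five_lt_sqrt_33]

lemma optimalReserve_lt_one : optimalReserve < 1 := by
  unfold optimalReserve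
  linarith [sqrt_33_lt_six]

lemma phiBeta_optimalReserve : phiBeta optimalReserve = 0 := by
  have hpos : 0 < optimalReserve := lt_trans (by norm_num) one_third_lt_optimalReserve
  rw [phiBeta_eq_div hpos.ne', div_eq_zero_iff]
  left
  unfold optimalReserve
  nlinarith [Real.sq_sqrt (show (0 : ℝ) ≤ 33 by norm_num)]

lemma one_sub_phiBeta_div_psiBeta_one : 1 - phiBeta 1 / psiBeta 1 = 1 / 3 := by
  unfold phiBeta psiBeta
  norm_num

/-- The Beta(2,2) counterexample: condition (e-maincond) fails for every
reserve `r` in the nonempty interval `(1/3, θ̄]`, where `θ̄ = (1+√33)/16`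
is the revenue-optimal reserve. -/
theorem beta_counterexample :
    (∀ t ∈ Set.Ioo (0 : ℝ) 1,
      phiBeta t = t - (1 - (3 * t ^ 2 - 2 * t ^ 3)) / (6 * t * (1 - t))) ∧
    (∀ t ∈ Set.Ioo (0 : ℝ) 1, HasDerivAt phiBeta (psiBeta t) t) ∧
    (phiBeta ((1 + Real.sqrt 33) / 16) = 0 ∧
      1 / 3 < (1 + Real.sqrt 33) / 16 ∧ (1 + Real.sqrt 33) / 16 < 1) ∧
    (1 - phiBeta 1 / psiBeta 1 = 1 / 3) ∧
    (∀ r : ℝ, 1 / 3 < r → r ≤ (1 + Real.sqrt 33) / 16 →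
      ∃ t ∈ Set.Icc r (1 : ℝ), t - phiBeta t / psiBeta t < r) := by
  refine ⟨fun t ht => phiBeta_eq_virtualValue ht.1.ne' ht.2.ne,
    fun t ht => hasDerivAt_phiBeta ht.1.ne',
    ⟨phiBeta_optimalReserve, one_third_lt_optimalReserve, optimalReserve_lt_one⟩,
    one_sub_phiBeta_div_psiBeta_one, fun r hr₁ hr₂ => ⟨1, ⟨?_, le_rfl⟩, ?_⟩⟩
  · exact hr₂.trans optimalReserve_lt_one.le
  · rwa [one_sub_phiBeta_div_psiBeta_one]
end

section
/- Let θ₁ = 1, w₁ = 7/10, θ₂ = 3/5, w₂ = 1, r = 1/2, x₁ = 1, x₂ = 1/2. Then there is no real number b₂ such that both (θ₁·w₁ − max(r·w₁, b₂·w₂))·x₁ ≥ (θ₁·w₁ − r·w₁)·x₂ and (θ₂·w₂ − r·w₂)·x₂ ≥ (θ₂·w₂ − max(r·w₂, b₂·w₂))·x₁ hold. -/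
/-!
Write `β = b₂ w₂` for the second advertiser's score. Since `max (r w₁) β ≥ β`, the first
advertiser's condition bounds `β x₁` from above by `θ₁ w₁ x₁ - (θ₁ w₁ - r w₁) x₂`. In the second
advertiser's condition the maximum cannot be the reserve score `r w₂`, because `θ₂ > r` and
`x₁ > x₂`; so it bounds `β x₁` from below by `θ₂ w₂ x₁ - (θ₂ w₂ - r w₂) x₂`. For the given data
these bounds are `0.525` and `0.55`.
-/

namespace GSP

variable (θ₁ w₁ θ₂ w₂ r b₂ x₁ x₂ : ℝ)

/-- Advertiser 1 does not gain by dropping to the second slot and paying the reserve. -/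
def TopSlotCondition : Prop :=
  (θ₁ * w₁ - max (r * w₁) (b₂ * w₂)) * x₁ ≥ (θ₁ * w₁ - r * w₁) * x₂

/-- Advertiser 2 does not gain by moving up to the first slot at the price set by its own bid. -/
def SecondSlotCondition : Prop :=
  (θ₂ * w₂ - r * w₂) * x₂ ≥ (θ₂ * w₂ - max (r * w₂) (b₂ * w₂)) * x₁

variable {θ₁ w₁ θ₂ w₂ r b₂ x₁ x₂}

lemma TopSlotCondition.score_le (hx₁ : 0 ≤ x₁) (h : TopSlotCondition θ₁ w₁ w₂ r b₂ x₁ x₂) :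
    b₂ * w₂ * x₁ ≤ θ₁ * w₁ * x₁ - (θ₁ * w₁ - r * w₁) * x₂ := by
  have := mul_le_mul_of_nonneg_right (le_max_right (r * w₁) (b₂ * w₂)) hx₁
  unfold TopSlotCondition at h
  linarith

lemma SecondSlotCondition.le_score (hx : x₂ < x₁) (hr : r * w₂ < θ₂ * w₂)
    (h : SecondSlotCondition θ₂ w₂ r b₂ x₁ x₂) :
    θ₂ * w₂ * x₁ - (θ₂ * w₂ - r * w₂) * x₂ ≤ b₂ * w₂ * x₁ := by
  unfold SecondSlotCondition at h
  rcases max_cases (r * w₂) (b₂ * w₂) with ⟨hmax, -⟩ | ⟨hmax, -⟩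
  · rw [hmax] at h
    nlinarith
  · rw [hmax] at h
    linarith

theorem not_topSlotCondition_and_secondSlotCondition (hx₂ : 0 ≤ x₂) (hx : x₂ < x₁)
    (hr : r * w₂ < θ₂ * w₂)
    (hgap : θ₁ * w₁ * x₁ - (θ₁ * w₁ - r * w₁) * x₂ < θ₂ * w₂ * x₁ - (θ₂ * w₂ - r * w₂) * x₂) :
    ¬ (TopSlotCondition θ₁ w₁ w₂ r b₂ x₁ x₂ ∧ SecondSlotCondition θ₂ w₂ r b₂ x₁ x₂) := by
  rintro ⟨h₁, h₂⟩
  have := h₁.score_le (by linarith)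
  have := h₂.le_score hx hr
  linarith

end GSP

/-- Appendix A counterexample: with `θ₁ = 1, w₁ = 7/10, θ₂ = 3/5, w₂ = 1, r = 1/2,
x₁ = 1, x₂ = 1/2`, no bid `b₂` satisfies both SNE inequalities, so no SNE of the
standard ranking with a reserve price can rank the advertisers by `θᵢ·wᵢ`. -/
theorem no_order_preserving_sne :
    ¬ ∃ b₂ : ℝ,
      ((1 : ℝ) * (7 / 10) - max ((1 / 2) * (7 / 10)) (b₂ * 1)) * 1 ≥
        ((1 : ℝ) * (7 / 10) - (1 / 2) * (7 / 10)) * (1 / 2) ∧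
      ((3 / 5 : ℝ) * 1 - (1 / 2) * 1) * (1 / 2) ≥
        ((3 / 5 : ℝ) * 1 - max ((1 / 2) * 1) (b₂ * 1)) * 1 := by
  rintro ⟨b₂, h₁, h₂⟩
  exact GSP.not_topSlotCondition_and_secondSlotCondition (θ₁ := 1) (w₁ := 7 / 10) (θ₂ := 3 / 5)
    (w₂ := 1) (r := 1 / 2) (b₂ := b₂) (x₁ := 1) (x₂ := 1 / 2)
    (by norm_num) (by norm_num) (by norm_num) (by norm_num) ⟨h₁, h₂⟩
end

section
/- Let r > 0 and let φ : ℝ → ℝ be strictly increasing on [r, ∞) with φ(r) ≤ 0, and suppose that for all reals t > u ≥ r one has r·(φ(t) − φ(u)) ≤ u·φ(t) − t·φ(u). Let n ∈ ℕ and let θ, w : Fin n → ℝ satisfy θ i > r and w i > 0 for all i. Let s : Fin n → ℝ be nonincreasing and nonnegative, and let σ, τ be permutations of Fin n such that k ↦ (θ(σ k) − r)·w(σ k) and k ↦ θ(τ k)·w(τ k) are strictly decreasing. Then ∑_{k} φ(θ(σ k))·w(σ k)·s k ≥ ∑_{k} φ(θ(τ k))·w(τ k)·s k. -/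
/-!
If the standard ranking puts advertiser `a` above `b` while the proposed ranking puts `b` above
`a`, then `b` has the larger virtual surplus `φ(θ)·w`: this is where the condition on `r` enters.
So the permutation from the standard to the proposed order only undoes inversions that raise
the virtual surplus; hence every prefix sum of virtual surpluses weakly increases, and Abel
summation against the nonincreasing, nonnegative click effects gives the claim.
-/

open Finset

theorem Finset.sum_le_sum_of_card_eq_of_sdiff_le {ι M : Type*} [DecidableEq ι]
    [AddCommMonoid M] [LinearOrder M] [IsOrderedAddMonoid M] {A B : Finset ι} (g : ι → M)
    (hcard : #A = #B) (hle : ∀ a ∈ A \ B, ∀ b ∈ B \ A, g a ≤ g b) :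
    ∑ a ∈ A, g a ≤ ∑ b ∈ B, g b := by
  have hcard_sdiff : #(A \ B) = #(B \ A) := by
    have := card_sdiff_add_card_inter A B
    have := card_sdiff_add_card_inter B A
    rw [inter_comm] at this
    omega
  obtain ⟨c, hAc, hcB⟩ : ∃ c, (∀ a ∈ A \ B, g a ≤ c) ∧ ∀ b ∈ B \ A, c ≤ g b := by
    rcases (B \ A).eq_empty_or_nonempty with hBA | hBA
    · rw [hBA, card_empty, card_eq_zero] at hcard_sdiff
      simp [hBA, hcard_sdiff]
    · obtain ⟨b₀, hb₀, hb₀_min⟩ := (B \ A).exists_min_image g hBA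
      exact ⟨g b₀, fun a ha => hle a ha b₀ hb₀, hb₀_min⟩
  have hsdiff : ∑ a ∈ A \ B, g a ≤ ∑ b ∈ B \ A, g b :=
    calc ∑ a ∈ A \ B, g a ≤ #(A \ B) • c := sum_le_card_nsmul _ _ _ hAc
      _ = #(B \ A) • c := by rw [hcard_sdiff]
      _ ≤ ∑ b ∈ B \ A, g b := card_nsmul_le_sum _ _ _ hcB
  rw [← sum_inter_add_sum_sdiff A B, ← sum_inter_add_sum_sdiff B A, inter_comm]
  exact add_le_add_right hsdiff _

theorem sum_Iic_comp_perm_le_sum_Iic {ι M : Type*} [LinearOrder ι] [LocallyFiniteOrderBot ι]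
    [AddCommMonoid M] [LinearOrder M] [IsOrderedAddMonoid M] (π : Equiv.Perm ι) (g : ι → M)
    (hinv : ∀ k l, k < l → π l < π k → g (π k) ≤ g (π l)) (m : ι) :
    ∑ k ∈ Iic m, g (π k) ≤ ∑ k ∈ Iic m, g k := by
  classical
  rw [← sum_image fun x _ y _ h => π.injective h]
  refine sum_le_sum_of_card_eq_of_sdiff_le g (card_image_of_injective _ π.injective) ?_
  intro b hb a ha
  simp only [mem_sdiff, mem_image, mem_Iic, not_exists, not_and] at hb ha
  obtain ⟨⟨k, hkm, rfl⟩, hmb⟩ := hb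
  obtain ⟨ham, ha_notin⟩ := ha
  have hm_lt : m < π.symm a := lt_of_not_ge fun h => ha_notin _ h (π.apply_symm_apply a)
  simpa using hinv k (π.symm a) (hkm.trans_lt hm_lt)
    (by simpa using ham.trans_lt (lt_of_not_ge hmb))

theorem Fin.sum_mul_nonpos_of_sum_Iic_nonpos {R : Type*} [CommRing R] [LinearOrder R]
    [IsStrictOrderedRing R] {n : ℕ} (D s : Fin n → R) (hD : ∀ m, ∑ k ∈ Iic m, D k ≤ 0)
    (hs : Antitone s) (hs_nonneg : ∀ k, 0 ≤ s k) :
    ∑ k, D k * s k ≤ 0 := by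
  induction n with
  | zero => simp
  | succ n ih =>
    -- peel off the last weight: `s = (s - s (last n)) + s (last n)`
    have hrest : ∑ k : Fin n, D k.castSucc * (s k.castSucc - s (last n)) ≤ 0 := by
      refine ih _ _ (fun m => ?_) (fun k l hkl => sub_le_sub_right (hs (by simpa using hkl)) _)
        (fun k => sub_nonneg.mpr (hs (le_last _)))
      have h := hD m.castSucc
      rw [← map_castSuccEmb_Iic, sum_map] at h
      simpa using h
    have htotal : ∑ k, D k ≤ 0 := by simpa using hD ⊤
    calc ∑ k, D k * s k
        = ∑ k : Fin n, D k.castSucc * (s k.castSucc - s (last n)) + (∑ k, D k) * s (last n) := by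
          simp only [sum_univ_castSucc, mul_sub, sum_sub_distrib, add_mul, sum_mul]
          ring
      _ ≤ 0 := add_nonpos hrest (mul_nonpos_of_nonpos_of_nonneg htotal (hs_nonneg _))

theorem Fin.sum_comp_perm_mul_le_sum_mul {R : Type*} [CommRing R] [LinearOrder R]
    [IsStrictOrderedRing R] {n : ℕ} (π : Equiv.Perm (Fin n)) (g s : Fin n → R)
    (hinv : ∀ k l, k < l → π l < π k → g (π k) ≤ g (π l))
    (hs : Antitone s) (hs_nonneg : ∀ k, 0 ≤ s k) :
    ∑ k, g (π k) * s k ≤ ∑ k, g k * s k := by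
  have hprefix : ∀ m, ∑ k ∈ Iic m, (g (π k) - g k) ≤ 0 := fun m => by
    rw [sum_sub_distrib, sub_nonpos]
    exact sum_Iic_comp_perm_le_sum_Iic π g hinv m
  have := Fin.sum_mul_nonpos_of_sum_Iic_nonpos _ s hprefix hs hs_nonneg
  simpa only [sub_mul, sum_sub_distrib, sub_nonpos] using this

theorem lt_of_score_inversion {r t u wt wu : ℝ} (hr : 0 < r) (hu : r < u) (hwt : 0 < wt)
    (hproposed : (u - r) * wu < (t - r) * wt) (hstandard : t * wt < u * wu) : u < t := by
  have hw : wt < wu := by nlinarith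
  nlinarith

theorem virtual_surplus_le_of_score_inversion {r t u wt wu : ℝ} {φ : ℝ → ℝ} (hr : 0 < r)
    (hmono : MonotoneOn φ (Set.Ici r))
    (hcond : ∀ t u : ℝ, r ≤ u → u < t → r * (φ t - φ u) ≤ u * φ t - t * φ u)
    (hu : r < u) (hwt : 0 < wt)
    (hproposed : (u - r) * wu < (t - r) * wt) (hstandard : t * wt < u * wu) :
    φ u * wu ≤ φ t * wt := by
  have hut : u < t := lt_of_score_inversion hr hu hwt hproposed hstandard
  have hc := hcond t u hu.le hut
  rcases le_or_gt (φ u) 0 with hφu | hφu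
  · have hφ : φ u ≤ φ t :=
      hmono (Set.mem_Ici.mpr hu.le) (Set.mem_Ici.mpr (hu.trans hut).le) hut.le
    have hcross : t * φ u ≤ u * φ t := by nlinarith
    refine le_of_mul_le_mul_left ?_ (hr.trans hu)
    calc u * (φ u * wu) = φ u * (u * wu) := by ring
      _ ≤ φ u * (t * wt) := mul_le_mul_of_nonpos_left hstandard.le hφu
      _ = (t * φ u) * wt := by ring
      _ ≤ (u * φ t) * wt := mul_le_mul_of_nonneg_right hcross hwt.le
      _ = u * (φ t * wt) := by ring
  · have hcross : (t - r) * φ u ≤ (u - r) * φ t := by linarith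
    refine le_of_mul_le_mul_left ?_ (sub_pos.mpr hu)
    calc (u - r) * (φ u * wu) = φ u * ((u - r) * wu) := by ring
      _ ≤ φ u * ((t - r) * wt) := mul_le_mul_of_nonneg_left hproposed.le hφu.le
      _ = ((t - r) * φ u) * wt := by ring
      _ ≤ ((u - r) * φ t) * wt := mul_le_mul_of_nonneg_right hcross hwt.le
      _ = (u - r) * (φ t * wt) := by ring

theorem revenue_dominance_pointwise_general (r : ℝ) (hr : 0 < r) (φ : ℝ → ℝ)
    (hmono : StrictMonoOn φ (Set.Ici r))
    (hcond : ∀ t u : ℝ, r ≤ u → u < t → r * (φ t - φ u) ≤ u * φ t - t * φ u)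
    (n : ℕ) (θ w : Fin n → ℝ)
    (hθ : ∀ i : Fin n, r < θ i) (hw : ∀ i : Fin n, 0 < w i)
    (s : Fin n → ℝ)
    (hs_mono : ∀ k l : Fin n, k ≤ l → s l ≤ s k)
    (hs_nonneg : ∀ k : Fin n, 0 ≤ s k)
    (σ τ : Equiv.Perm (Fin n))
    (hσ : ∀ k l : Fin n, k < l → (θ (σ l) - r) * w (σ l) < (θ (σ k) - r) * w (σ k))
    (hτ : ∀ k l : Fin n, k < l → θ (τ l) * w (τ l) < θ (τ k) * w (τ k)) :
    ∑ k, φ (θ (τ k)) * w (τ k) * s k ≤ ∑ k, φ (θ (σ k)) * w (σ k) * s k := by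
  -- `π k` is the proposed-ranking position of the advertiser in standard position `k`
  set π : Equiv.Perm (Fin n) := τ.trans σ.symm
  have hπ : ∀ k, σ (π k) = τ k := fun k => σ.apply_symm_apply (τ k)
  have hinv : ∀ k l, k < l → π l < π k →
      φ (θ (σ (π k))) * w (σ (π k)) ≤ φ (θ (σ (π l))) * w (σ (π l)) := by
    intro k l hkl hπlk
    have hproposed := hσ _ _ hπlk
    simp only [hπ] at hproposed ⊢
    exact virtual_surplus_le_of_score_inversion hr hmono.monotoneOn hcond (hθ _) (hw _)
      hproposed (hτ k l hkl)
  simpa only [hπ] using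
    Fin.sum_comp_perm_mul_le_sum_mul π (fun a => φ (θ (σ a)) * w (σ a)) s hinv hs_mono hs_nonneg

/-- Per-realisation core of Theorem 2 (revenue dominance): the virtual surplus
of the allocation induced by the proposed ranking `(θᵢ − r)·wᵢ` is at least
that induced by the standard ranking `θᵢ·wᵢ`. -/
theorem revenue_dominance_pointwise (r : ℝ) (hr : 0 < r) (φ : ℝ → ℝ)
    (hmono : StrictMonoOn φ (Set.Ici r))
    (hφr : φ r ≤ 0)
    (hcond : ∀ t u : ℝ, r ≤ u → u < t → r * (φ t - φ u) ≤ u * φ t - t * φ u)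
    (n : ℕ) (θ w : Fin n → ℝ)
    (hθ : ∀ i : Fin n, r < θ i) (hw : ∀ i : Fin n, 0 < w i)
    (s : Fin n → ℝ)
    (hs_mono : ∀ k l : Fin n, k ≤ l → s l ≤ s k)
    (hs_nonneg : ∀ k : Fin n, 0 ≤ s k)
    (σ τ : Equiv.Perm (Fin n))
    (hσ : ∀ k l : Fin n, k < l → (θ (σ l) - r) * w (σ l) < (θ (σ k) - r) * w (σ k))
    (hτ : ∀ k l : Fin n, k < l → θ (τ l) * w (τ l) < θ (τ k) * w (τ k)) :
    ∑ k, φ (θ (τ k)) * w (τ k) * s k ≤ ∑ k, φ (θ (σ k)) * w (σ k) * s k :=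
  revenue_dominance_pointwise_general r hr φ hmono hcond n θ w hθ hw s hs_mono hs_nonneg σ τ hσ hτ
end

section
/- Let n ≥ 1 and let Y_1 ≥ Y_2 ≥ ⋯ ≥ Y_n ≥ 0 and x_1 ≥ x_2 ≥ ⋯ ≥ x_n be real numbers. For each i ∈ {1,…,n} define P_i := ∑_{j=i+1}^{n} Y_j·(x_{j−1} − x_j). Then for all i, j ∈ {1,…,n}: Y_i·x_i − P_i ≥ Y_i·x_j − P_j. -/
/-!
The payoff `u k = Y i * x k - P k` of advertiser `i` in slot `k` has one-step increments
`u k - u (k + 1) = (Y i - Y (k + 1)) * (x k - x (k + 1))`, because `P k` exceeds `P (k + 1)` by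
exactly the term `Y (k + 1) * (x k - x (k + 1))`. Since `x` is antitone, the sign of the increment is that of `Y i - Y (k + 1)`, so `u` rises
up to slot `i` and falls after it: it is unimodal with peak at `i`.
-/

open Finset

namespace Nat

variable {α : Type*} [Preorder α] {f : ℕ → α} {a b c : ℕ}

theorem monotoneOn_Icc_of_le_succ (hf : ∀ k, a ≤ k → k < b → f k ≤ f (k + 1)) :
    MonotoneOn f (Set.Icc a b) :=
  monotoneOn_of_le_succ Set.ordConnected_Icc fun k _ hk hk' ↦ by
    rw [Order.succ_eq_add_one] at hk' ⊢
    exact hf k hk.1 (by have := hk'.2; omega)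

theorem antitoneOn_Icc_of_succ_le (hf : ∀ k, a ≤ k → k < b → f (k + 1) ≤ f k) :
    AntitoneOn f (Set.Icc a b) :=
  monotoneOn_Icc_of_le_succ (α := αᵒᵈ) hf

theorem isMaxOn_Icc_of_le_succ_of_succ_le (hup : ∀ k, a ≤ k → k < c → f k ≤ f (k + 1))
    (hdown : ∀ k, c ≤ k → k < b → f (k + 1) ≤ f k) : IsMaxOn f (Set.Icc a b) c := by
  intro j ⟨haj, hjb⟩
  rcases le_total j c with hjc | hcj
  · exact monotoneOn_Icc_of_le_succ hup ⟨haj, hjc⟩ ⟨haj.trans hjc, le_rfl⟩ hjc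
  · exact antitoneOn_Icc_of_succ_le hdown ⟨le_rfl, hcj.trans hjb⟩ ⟨hcj, hjb⟩ hcj

end Nat

section LowestPrices

variable {n : ℕ} {Y x P : ℕ → ℝ}
  (hP : ∀ i : ℕ, P i = ∑ j ∈ Icc (i + 1) n, Y j * (x (j - 1) - x j))
include hP

theorem price_eq_add_price_succ {k : ℕ} (hk : k < n) :
    P k = Y (k + 1) * (x k - x (k + 1)) + P (k + 1) := by
  rw [hP, hP, ← add_sum_Ioc_eq_sum_Icc hk, ← Icc_add_one_left_eq_Ioc, Nat.add_sub_cancel]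

theorem payoff_sub_payoff_succ (c : ℕ) {k : ℕ} (hk : k < n) :
    (Y c * x k - P k) - (Y c * x (k + 1) - P (k + 1)) = (Y c - Y (k + 1)) * (x k - x (k + 1)) := by
  rw [price_eq_add_price_succ hP hk]
  ring

end LowestPrices

theorem lowest_sne_exists_general (n : ℕ) (Y x : ℕ → ℝ)
    (hY_mono : ∀ j : ℕ, 1 ≤ j → j < n → Y (j + 1) ≤ Y j)
    (hx_mono : ∀ j : ℕ, 1 ≤ j → j < n → x (j + 1) ≤ x j)
    (P : ℕ → ℝ)
    (hP : ∀ i : ℕ, P i = ∑ j ∈ Finset.Icc (i + 1) n, Y j * (x (j - 1) - x j)) :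
    ∀ i j : ℕ, 1 ≤ i → i ≤ n → 1 ≤ j → j ≤ n →
      Y i * x j - P j ≤ Y i * x i - P i := by
  intro i j hi hin hj hjn
  have hY := Nat.antitoneOn_Icc_of_succ_le hY_mono
  refine Nat.isMaxOn_Icc_of_le_succ_of_succ_le (f := fun k ↦ Y i * x k - P k) (a := 1) (b := n)
    (fun k hk hki ↦ ?_) (fun k hik hkn ↦ ?_) ⟨hj, hjn⟩
  · have hYi : Y i ≤ Y (k + 1) := hY ⟨by omega, by omega⟩ ⟨hi, hin⟩ hki
    rw [← sub_nonpos, payoff_sub_payoff_succ hP i (by omega)]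
    exact mul_nonpos_of_nonpos_of_nonneg (sub_nonpos.mpr hYi)
      (sub_nonneg.mpr (hx_mono k hk (by omega)))
  · have hYi : Y (k + 1) ≤ Y i := hY ⟨hi, hin⟩ ⟨by omega, hkn⟩ (by omega)
    rw [← sub_nonneg, payoff_sub_payoff_succ hP i hkn]
    exact mul_nonneg (sub_nonneg.mpr hYi) (sub_nonneg.mpr (hx_mono k (by omega) hkn))

/-- Existence part of Theorem 1: the lowest bid profile defined by recursion
(e-lowSNE) satisfies the SNE inequalities `Yᵢ·xᵢ − Pᵢ ≥ Yᵢ·xⱼ − Pⱼ`. -/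
theorem lowest_sne_exists (n : ℕ) (hn : 1 ≤ n) (Y x : ℕ → ℝ)
    (hY_mono : ∀ j : ℕ, 1 ≤ j → j < n → Y (j + 1) ≤ Y j)
    (hY_nonneg : 0 ≤ Y n)
    (hx_mono : ∀ j : ℕ, 1 ≤ j → j < n → x (j + 1) ≤ x j)
    (P : ℕ → ℝ)
    (hP : ∀ i : ℕ, P i = ∑ j ∈ Finset.Icc (i + 1) n, Y j * (x (j - 1) - x j)) :
    ∀ i j : ℕ, 1 ≤ i → i ≤ n → 1 ≤ j → j ≤ n →
      Y i * x j - P j ≤ Y i * x i - P i :=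
  lowest_sne_exists_general n Y x hY_mono hx_mono P hP
end
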